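/- For a prime p and e ≥ 1, det(A_{p^e}) = (−1)^{p^e − 1} · p^{(p^e − 1)/(p − 1)}, where A_{p^e} is the matrix of the canonical map ℤ[X]/(X^{p^e}−1) → ⊕_{j=0}^{e} ℤ[X]/Φ_{p^j}(X) in the standard monomial bases. -/

import Mathlib

open Polynomial

/-- Row labels of `Amat n`: pairs `(d, i)` with `d` a divisor of `n` (in increasing
order) and `0 ≤ i < φ(d)`. -/
def rowPairs (n : ℕ) : List (ℕ × ℕ) :=
  (n.divisors.sort (· ≤ ·)).flatMap fun d => (List.range d.totient).map fun i => (d, i)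

/-- The matrix of the canonical map `Ψₙ : ℤ[X]/(Xⁿ−1) → ⊕_{d∣n} ℤ[X]/Φ_d(X)` with
respect to the standard monomial bases. -/
noncomputable def Amat (n : ℕ) : Matrix (Fin n) (Fin n) ℤ :=
  Matrix.of fun r c =>
    let p := (rowPairs n).getD (r : ℕ) (1, 0)
    (((X : ℤ[X]) ^ (c : ℕ)) %ₘ cyclotomic p.1 ℤ).coeff p.2

/-!
Order the divisors of `p ^ (e + 1)` as `1, p, …, p ^ e, p ^ (e + 1)`. Since `Φ_d ∣ X ^ (p ^ e) - 1`
for every `d ∣ p ^ e`, the first `p ^ e` rows of `A_{p^(e+1)}` are the rows of `A_{p^e}` read with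
the column index taken mod `p ^ e`. The last `φ = p ^ e (p - 1)` rows hold the coefficients of
`X ^ c mod Φ_{p^(e+1)}`: the identity on the first `φ` columns and, because
`Φ_{p^(e+1)} = ∑_{k<p} X ^ (k p ^ e)`, the reduction `X ^ (φ + j) ≡ -∑_{k<p-1} X ^ (j + k p ^ e)` on
the last `p ^ e` columns. Rotating the rows by `p ^ e` puts that identity block in the corner,
and its Schur complement is `A_{p^e} + (p - 1) A_{p^e} = p A_{p^e}`. Hence
`det A_{p^(e+1)} = ± p ^ (p ^ e) det A_{p^e}`, where `±` is the sign of the rotation; as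
`m (m - 1)` is even, these signs telescope to `(-1) ^ (p ^ e - 1)`.
-/

open Finset Matrix

lemma X_pow_modByMonic_eq_X_pow_mod {R : Type*} [CommRing R] {q : R[X]} (hq : q.Monic) {m : ℕ}
    (h : q ∣ X ^ m - 1) (c : ℕ) : X ^ c %ₘ q = X ^ (c % m) %ₘ q := by
  refine modByMonic_eq_of_dvd_sub hq (h.trans ?_)
  have hc : (X : R[X]) ^ c - X ^ (c % m) = X ^ (c % m) * (X ^ (m * (c / m)) - 1) := by
    rw [mul_sub, mul_one, ← pow_add, Nat.mod_add_div]
  rw [hc]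
  exact (pow_one_sub_dvd_pow_mul_sub_one _ _ _).mul_left _

lemma X_pow_modByMonic_cyclotomic_prime_pow_succ {R : Type*} [CommRing R] [Nontrivial R] {p : ℕ}
    (hp : p.Prime) {e j : ℕ} (hj : j < p ^ e) :
    X ^ (p ^ e * (p - 1) + j) %ₘ cyclotomic (p ^ (e + 1)) R =
      -∑ k ∈ range (p - 1), X ^ (j + p ^ e * k) := by
  have hΦ := cyclotomic.monic (p ^ (e + 1)) R
  have hgeom : (X : R[X]) ^ (p ^ e * (p - 1) + j) + ∑ k ∈ range (p - 1), X ^ (j + p ^ e * k) =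
      X ^ j * cyclotomic (p ^ (e + 1)) R := by
    obtain ⟨q, rfl⟩ : ∃ q, p = q + 1 := ⟨p - 1, (Nat.sub_add_cancel hp.one_le).symm⟩
    rw [cyclotomic_prime_pow_eq_geom_sum hp, mul_sum, sum_range_succ, Nat.add_sub_cancel]
    simp only [← pow_mul, ← pow_add]
    ring_nf
  have hdeg : (-∑ k ∈ range (p - 1), (X : R[X]) ^ (j + p ^ e * k)).degree <
      (cyclotomic (p ^ (e + 1)) R).degree := by
    rw [degree_neg, degree_cyclotomic, Nat.totient_prime_pow_succ hp]
    refine (degree_sum_le _ _).trans_lt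
      ((Finset.sup_lt_iff (WithBot.bot_lt_coe _)).mpr fun k hk => ?_)
    rw [degree_X_pow, Nat.cast_lt]
    have : p ^ e * k + p ^ e ≤ p ^ e * (p - 1) := Nat.mul_le_mul_left _ (mem_range.mp hk)
    omega
  rw [← (modByMonic_eq_self_iff hΦ).mpr hdeg]
  exact modByMonic_eq_of_dvd_sub hΦ ⟨X ^ j, by rw [sub_neg_eq_add, hgeom, mul_comm]⟩

lemma sum_apply_X_pow_mul_coeff {R : Type*} [CommRing R] (f : R[X] →ₗ[R] R) {g : R[X]} {k : ℕ}
    (hg : g.natDegree < k) : ∑ i ∈ range k, f (X ^ i) * g.coeff i = f g := by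
  conv_rhs => rw [g.as_sum_range_C_mul_X_pow' hg]
  simp only [map_sum, C_mul', map_smul, smul_eq_mul]
  exact sum_congr rfl fun i _ => mul_comm _ _

lemma val_finRotate_pow_apply {n : ℕ} (k : ℕ) (x : Fin n) :
    ((finRotate n ^ k) x : ℕ) = (x + k) % n := by
  induction k with
  | zero => simp [Nat.mod_eq_of_lt x.isLt]
  | succ k ih =>
    have := x.neZero
    rw [pow_succ', Equiv.Perm.mul_apply, finRotate_apply, Fin.val_add, ih]
    simp [Nat.add_mod, ← add_assoc]

lemma det_submatrix_finRotate_pow {R : Type*} [CommRing R] {n : ℕ} (k : ℕ)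
    (A : Matrix (Fin n) (Fin n) R) :
    (A.submatrix (finRotate n ^ k) id).det = (-1) ^ ((n - 1) * k) * A.det := by
  rw [det_permute, map_pow, sign_finRotate, pow_mul]
  push_cast
  rfl

lemma length_rowPairs (n : ℕ) : (rowPairs n).length = n := by
  rw [rowPairs, List.length_flatMap, (Finset.sort_perm_toList _ _).map _ |>.sum_eq,
    Finset.sum_map_toList]
  simpa using Nat.sum_totient n

lemma sort_divisors_prime_pow {p : ℕ} (hp : p.Prime) (k : ℕ) :
    (p ^ k).divisors.sort (· ≤ ·) = (List.range (k + 1)).map (p ^ ·) := by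
  rw [Nat.divisors_prime_pow hp,
    ← ((pow_right_strictMono₀ hp.one_lt).strictMonoOn _).map_finsetSort, Finset.sort_range]
  rfl

lemma rowPairs_prime_pow_succ {p : ℕ} (hp : p.Prime) (e : ℕ) :
    rowPairs (p ^ (e + 1)) =
      rowPairs (p ^ e) ++ (List.range (p ^ e * (p - 1))).map fun i => (p ^ (e + 1), i) := by
  rw [rowPairs, rowPairs, sort_divisors_prime_pow hp, sort_divisors_prime_pow hp,
    List.range_succ (n := e + 1), List.map_append, List.flatMap_append]
  simp [Nat.totient_prime_pow_succ hp]

lemma fst_getD_rowPairs_dvd (n r : ℕ) : ((rowPairs n).getD r (1, 0)).1 ∣ n := by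
  rcases lt_or_ge r (rowPairs n).length with hr | hr
  · rw [List.getD_eq_getElem _ _ hr]
    obtain ⟨d, hd, hmem⟩ := List.mem_flatMap.mp (List.getElem_mem hr)
    obtain ⟨i, -, hi⟩ := List.mem_map.mp hmem
    rw [← hi]
    exact (Nat.mem_divisors.mp ((Finset.mem_sort _).mp hd)).1
  · rw [List.getD_eq_default _ _ hr]
    exact one_dvd n

noncomputable def rowFunctional (n r : ℕ) : ℤ[X] →ₗ[ℤ] ℤ :=
  lcoeff ℤ ((rowPairs n).getD r (1, 0)).2 ∘ₗ
    modByMonicHom (cyclotomic ((rowPairs n).getD r (1, 0)).1 ℤ)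

lemma Amat_apply (n : ℕ) (r c : Fin n) : Amat n r c = rowFunctional n r (X ^ (c : ℕ)) := rfl

lemma rowFunctional_X_pow_mod (n r c : ℕ) :
    rowFunctional n r (X ^ c) = rowFunctional n r (X ^ (c % n)) := by
  have hΦ := cyclotomic.dvd_X_pow_sub_one ((rowPairs n).getD r (1, 0)).1 ℤ
  simp only [rowFunctional, LinearMap.comp_apply, modByMonicHom_apply]
  rw [X_pow_modByMonic_eq_X_pow_mod (cyclotomic.monic _ ℤ) hΦ c,
    X_pow_modByMonic_eq_X_pow_mod (cyclotomic.monic _ ℤ) hΦ (c % n),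
    Nat.mod_mod_of_dvd _ (fst_getD_rowPairs_dvd n r)]

lemma rowFunctional_prime_pow_succ_of_lt {p : ℕ} (hp : p.Prime) {e r : ℕ} (hr : r < p ^ e) :
    rowFunctional (p ^ (e + 1)) r = rowFunctional (p ^ e) r := by
  rw [rowFunctional, rowPairs_prime_pow_succ hp,
    List.getD_append _ _ _ _ (by rwa [length_rowPairs]), rowFunctional]

lemma rowFunctional_prime_pow_succ_add {p : ℕ} (hp : p.Prime) {e i : ℕ}
    (hi : i < p ^ e * (p - 1)) (f : ℤ[X]) :
    rowFunctional (p ^ (e + 1)) (p ^ e + i) f = (f %ₘ cyclotomic (p ^ (e + 1)) ℤ).coeff i := by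
  rw [rowFunctional, rowPairs_prime_pow_succ hp,
    List.getD_append_right _ _ _ _ (by rw [length_rowPairs]; omega), length_rowPairs,
    Nat.add_sub_cancel_left, List.getD_eq_getElem _ _ (by simpa using hi)]
  simp

lemma rowFunctional_X_pow_modByMonic_cyclotomic {p : ℕ} (hp : p.Prime) {e j : ℕ}
    (hj : j < p ^ e) (r : ℕ) :
    rowFunctional (p ^ e) r (X ^ (p ^ e * (p - 1) + j) %ₘ cyclotomic (p ^ (e + 1)) ℤ) =
      -((p - 1 : ℕ) : ℤ) * rowFunctional (p ^ e) r (X ^ j) := by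
  have hperiodic (k : ℕ) : rowFunctional (p ^ e) r (X ^ (j + p ^ e * k)) =
      rowFunctional (p ^ e) r (X ^ j) := by
    rw [rowFunctional_X_pow_mod, Nat.add_mul_mod_self_left, ← rowFunctional_X_pow_mod]
  rw [X_pow_modByMonic_cyclotomic_prime_pow_succ hp hj, map_neg, map_sum]
  simp [hperiodic]

lemma pow_mul_pred_add_pow {p : ℕ} (hp : 0 < p) (e : ℕ) :
    p ^ e * (p - 1) + p ^ e = p ^ (e + 1) := by
  rw [pow_succ, ← Nat.mul_succ, Nat.succ_eq_add_one, Nat.sub_add_cancel hp]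

def powSuccSplit (p : ℕ) [NeZero p] (e : ℕ) :
    Fin (p ^ e * (p - 1)) ⊕ Fin (p ^ e) ≃ Fin (p ^ (e + 1)) :=
  finSumFinEquiv.trans (finCongr (pow_mul_pred_add_pow (NeZero.pos p) e))

@[simp]
lemma val_powSuccSplit_inl {p : ℕ} [NeZero p] (e : ℕ) (i : Fin (p ^ e * (p - 1))) :
    (powSuccSplit p e (.inl i) : ℕ) = i := rfl

@[simp]
lemma val_powSuccSplit_inr {p : ℕ} [NeZero p] (e : ℕ) (j : Fin (p ^ e)) :
    (powSuccSplit p e (.inr j) : ℕ) = p ^ e * (p - 1) + j := rfl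

/-- `Amat (p ^ (e + 1))` in block form, with the rows rotated by `p ^ e` so that the rows of the
divisor `p ^ (e + 1)` come first. -/
noncomputable def blockAmat (p : ℕ) [NeZero p] (e : ℕ) :
    Matrix (Fin (p ^ e * (p - 1)) ⊕ Fin (p ^ e)) (Fin (p ^ e * (p - 1)) ⊕ Fin (p ^ e)) ℤ :=
  ((Amat (p ^ (e + 1))).submatrix (finRotate _ ^ p ^ e) id).submatrix (powSuccSplit p e)
    (powSuccSplit p e)

section blockAmat

variable {p : ℕ} [hp : Fact p.Prime] (e : ℕ)

lemma blockAmat_inl (i : Fin (p ^ e * (p - 1))) (b : Fin (p ^ e * (p - 1)) ⊕ Fin (p ^ e)) :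
    blockAmat p e (.inl i) b =
      (X ^ (powSuccSplit p e b : ℕ) %ₘ cyclotomic (p ^ (e + 1)) ℤ).coeff i := by
  have hrot : ((finRotate _ ^ p ^ e) (powSuccSplit p e (.inl i)) : ℕ) = p ^ e + i := by
    rw [val_finRotate_pow_apply, val_powSuccSplit_inl, Nat.add_comm, Nat.mod_eq_of_lt]
    rw [← pow_mul_pred_add_pow hp.out.pos e, Nat.add_comm]
    exact Nat.add_lt_add_right i.isLt _
  rw [blockAmat, submatrix_apply, submatrix_apply, id, Amat_apply, hrot,
    rowFunctional_prime_pow_succ_add hp.out i.isLt]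

lemma blockAmat_inr (r : Fin (p ^ e)) (b : Fin (p ^ e * (p - 1)) ⊕ Fin (p ^ e)) :
    blockAmat p e (.inr r) b = rowFunctional (p ^ e) r (X ^ (powSuccSplit p e b : ℕ)) := by
  have hrot : ((finRotate _ ^ p ^ e) (powSuccSplit p e (.inr r)) : ℕ) = r := by
    rw [val_finRotate_pow_apply, val_powSuccSplit_inr, ← pow_mul_pred_add_pow hp.out.pos e,
      add_right_comm, Nat.add_mod_left, Nat.mod_eq_of_lt (by omega)]
  rw [blockAmat, submatrix_apply, submatrix_apply, id, Amat_apply, hrot,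
    rowFunctional_prime_pow_succ_of_lt hp.out r.isLt]

lemma toBlocks₁₁_blockAmat : (blockAmat p e).toBlocks₁₁ = 1 := by
  have hΦ := cyclotomic.monic (p ^ (e + 1)) ℤ
  ext i i'
  rw [toBlocks₁₁, of_apply, blockAmat_inl, val_powSuccSplit_inl,
    (modByMonic_eq_self_iff hΦ).mpr, coeff_X_pow, one_apply]
  · exact if_congr Fin.val_inj rfl rfl
  rw [degree_X_pow, degree_cyclotomic, Nat.totient_prime_pow_succ hp.out, Nat.cast_lt]
  exact i'.isLt

lemma schur_blockAmat :
    (blockAmat p e).toBlocks₂₂ - (blockAmat p e).toBlocks₂₁ * (blockAmat p e).toBlocks₁₂ =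
      (p : ℤ) • Amat (p ^ e) := by
  have hΦ := cyclotomic.monic (p ^ (e + 1)) ℤ
  have hdeg : (cyclotomic (p ^ (e + 1)) ℤ).natDegree = p ^ e * (p - 1) := by
    rw [natDegree_cyclotomic, Nat.totient_prime_pow_succ hp.out]
  have hΦ1 : cyclotomic (p ^ (e + 1)) ℤ ≠ 1 := by
    rw [← hΦ.natDegree_pos, hdeg]
    exact Nat.mul_pos (pow_pos hp.out.pos e) (Nat.sub_pos_of_lt hp.out.one_lt)
  ext r j
  set f := rowFunctional (p ^ e) r
  set g := X ^ (p ^ e * (p - 1) + j) %ₘ cyclotomic (p ^ (e + 1)) ℤ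
  have hperiodic : f (X ^ (p ^ e * (p - 1) + j)) = f (X ^ (j : ℕ)) := by
    rw [rowFunctional_X_pow_mod, Nat.mul_add_mod, ← rowFunctional_X_pow_mod]
  have hprod : ((blockAmat p e).toBlocks₂₁ * (blockAmat p e).toBlocks₁₂) r j = f g := by
    simp only [mul_apply, toBlocks₂₁, toBlocks₁₂, of_apply, blockAmat_inl, blockAmat_inr,
      val_powSuccSplit_inl, val_powSuccSplit_inr]
    rw [Fin.sum_univ_eq_sum_range (fun i => f (X ^ i) * g.coeff i),
      sum_apply_X_pow_mul_coeff f (hdeg ▸ natDegree_modByMonic_lt _ hΦ hΦ1)]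
  rw [Matrix.sub_apply, hprod, rowFunctional_X_pow_modByMonic_cyclotomic hp.out j.isLt, toBlocks₂₂,
    of_apply, blockAmat_inr, val_powSuccSplit_inr, hperiodic, Matrix.smul_apply, Amat_apply,
    smul_eq_mul]
  push_cast [Nat.cast_sub hp.out.one_le]
  ring

lemma det_blockAmat : (blockAmat p e).det = (p : ℤ) ^ p ^ e * (Amat (p ^ e)).det := by
  rw [← fromBlocks_toBlocks (blockAmat p e), toBlocks₁₁_blockAmat, det_fromBlocks_one₁₁,
    schur_blockAmat, det_smul, Fintype.card_fin]

lemma det_Amat_prime_pow_succ :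
    (Amat (p ^ (e + 1))).det =
      (-1) ^ ((p ^ (e + 1) - 1) * p ^ e) * (p : ℤ) ^ p ^ e * (Amat (p ^ e)).det := by
  have h := det_blockAmat (p := p) e
  rw [blockAmat, det_submatrix_equiv_self, det_submatrix_finRotate_pow] at h
  rw [mul_assoc, ← h, ← mul_assoc, ← mul_pow, neg_one_mul, neg_neg, one_pow, one_mul]

end blockAmat

lemma det_Amat_one : (Amat 1).det = 1 := by
  have h : (1 : ℤ[X]) %ₘ (X - 1) = 1 := by
    simpa using modByMonic_X_sub_C_eq_C_eval (1 : ℤ[X]) 1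
  simp [Amat, rowPairs, h]

lemma neg_one_pow_pred_mul_add_pred {m n : ℕ} (hn : 0 < n) (hmn : m ∣ n) :
    (-1 : ℤ) ^ ((n - 1) * m + (m - 1)) = (-1) ^ (n - 1) := by
  obtain ⟨q, rfl⟩ := hmn
  have hm : 1 ≤ m := Nat.pos_of_mul_pos_right hn
  have hexp : (m * q - 1) * m + (m - 1) = (m * q - 1) + q * (m * (m - 1)) := by
    zify [hm, (hn : 1 ≤ m * q)]
    ring
  rw [hexp, pow_add, ((Nat.even_mul_pred_self m).mul_left q).neg_one_pow, mul_one]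

lemma det_Amat_prime_pow_eq_geom_sum {p : ℕ} (hp : p.Prime) (e : ℕ) :
    (Amat (p ^ e)).det = (-1) ^ (p ^ e - 1) * (p : ℤ) ^ ∑ k ∈ range e, p ^ k := by
  have := Fact.mk hp
  induction e with
  | zero => rw [pow_zero, det_Amat_one]; simp
  | succ e ih =>
    rw [det_Amat_prime_pow_succ, ih, sum_range_succ, pow_add (p : ℤ),
      ← neg_one_pow_pred_mul_add_pred (pow_pos hp.pos (e + 1)) (pow_dvd_pow p e.le_succ), pow_add]
    ring

theorem det_Amat_prime_pow_general (p e : ℕ) (hp : p.Prime) :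
    (Amat (p ^ e)).det = (-1) ^ (p ^ e - 1) * (p : ℤ) ^ ((p ^ e - 1) / (p - 1)) := by
  rw [← Nat.geomSum_eq hp.two_le, det_Amat_prime_pow_eq_geom_sum hp]

theorem det_Amat_prime_pow (p e : ℕ) (hp : p.Prime) (he : 1 ≤ e) :
    (Amat (p ^ e)).det = (-1) ^ (p ^ e - 1) * (p : ℤ) ^ ((p ^ e - 1) / (p - 1)) :=
  det_Amat_prime_pow_general p e hp
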